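/- Let R be a commutative ring, let P be an ℕ-indexed chain complex of R-modules all of whose terms are flat, and let 0 → A → B → C → 0 be a sequence of chain maps of ℕ-indexed chain complexes of R-modules that is short exact in every degree. Then for every n ≥ 0 the induced sequence 0 → (P ⊗_Δ A)_n → (P ⊗_Δ B)_n → (P ⊗_Δ C)_n → 0 of R-modules is short exact. -/

import Mathlib

open CategoryTheory CategoryTheory.Limits CategoryTheory.MonoidalCategory AlgebraicTopology

noncomputable section

universe u

variable (R : Type u) [CommRing R]

/-- The diagonal of the degreewise tensor product of two simplicial `R`-modules. -/
def diagTensor (A B : SimplicialObject (ModuleCat.{u} R)) :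
    SimplicialObject (ModuleCat.{u} R) where
  obj n := A.obj n ⊗ B.obj n
  map f := A.map f ⊗ₘ B.map f
  map_id n := by
    show A.map (𝟙 n) ⊗ₘ B.map (𝟙 n) = 𝟙 _
    rw [CategoryTheory.Functor.map_id, CategoryTheory.Functor.map_id, id_tensorHom_id]
  map_comp f g := by
    show A.map (f ≫ g) ⊗ₘ B.map (f ≫ g) = (A.map f ⊗ₘ B.map f) ≫ (A.map g ⊗ₘ B.map g)
    rw [Functor.map_comp, Functor.map_comp, tensorHom_comp_tensorHom]

/-- The simplicial tensor product `P ⊗_Δ Q := N (diag (Γ P ⊗ Γ Q))` of two `ℕ`-indexed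
chain complexes of `R`-modules, where `Γ` is the Dold–Kan functor and `N` is the
normalized Moore complex functor. -/
def sTensor (P Q : ChainComplex (ModuleCat.{u} R) ℕ) : ChainComplex (ModuleCat.{u} R) ℕ :=
  (normalizedMooreComplex (ModuleCat.{u} R)).obj
    (diagTensor R (CategoryTheory.Abelian.DoldKan.Γ.obj P)
      (CategoryTheory.Abelian.DoldKan.Γ.obj Q))

/-- The map of simplicial `R`-modules induced on diagonal tensor products by a map in the
second variable. -/
def diagTensorMap (A : SimplicialObject (ModuleCat.{u} R))
    {B B' : SimplicialObject (ModuleCat.{u} R)} (h : B ⟶ B') :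
    diagTensor R A B ⟶ diagTensor R A B' where
  app n := A.obj n ◁ h.app n
  naturality {n n'} f := by
    show (A.map f ⊗ₘ B.map f) ≫ (A.obj n' ◁ h.app n') =
      (A.obj n ◁ h.app n) ≫ (A.map f ⊗ₘ B'.map f)
    simp only [← MonoidalCategory.id_tensorHom, MonoidalCategory.tensorHom_comp_tensorHom,
      Category.id_comp, Category.comp_id, NatTrans.naturality]

/-- The chain map `P ⊗_Δ B ⟶ P ⊗_Δ B'` induced by a chain map `B ⟶ B'`. -/
def sTensorMap (P : ChainComplex (ModuleCat.{u} R) ℕ)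
    {B B' : ChainComplex (ModuleCat.{u} R) ℕ} (h : B ⟶ B') :
    sTensor R P B ⟶ sTensor R P B' :=
  (normalizedMooreComplex (ModuleCat.{u} R)).map
    (diagTensorMap R (CategoryTheory.Abelian.DoldKan.Γ.obj P)
      (CategoryTheory.Abelian.DoldKan.Γ.map h))

/-! Γ and N are the two halves of the Dold–Kan equivalence, so both are exact. The simplicial
module Γ(P) is degreewise a direct sum of terms of P, hence flat, so tensoring the short exact
sequence Γ(A) → Γ(B) → Γ(C) with it stays short exact in each simplicial degree, that is, as a
sequence of simplicial modules. Applying N and evaluating in degree n gives the claim. -/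

namespace CategoryTheory

lemma jointlyReflectIsomorphisms_evaluation (J C : Type*) [Category* J] [Category* C] :
    JointlyReflectIsomorphisms fun j : J => (evaluation J C).obj j :=
  ⟨fun f h => have : ∀ j, IsIso (f.app j) := h; NatIso.isIso_of_isIso_app f⟩

lemma ShortComplex.shortExact_iff_evaluation {J C : Type*} [Category* J] [Category* C]
    [Abelian C] (S : ShortComplex (J ⥤ C)) :
    S.ShortExact ↔ ∀ j, (S.map ((evaluation J C).obj j)).ShortExact :=
  (jointlyReflectIsomorphisms_evaluation J C).shortExact_iff S

namespace Abelian.DoldKan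

instance {A : Type*} [Category* A] [Abelian A] : (Γ : ChainComplex A ℕ ⥤ _).IsEquivalence :=
  equivalence.isEquivalence_inverse

instance {A : Type*} [Category* A] [Abelian A] : (N : SimplicialObject A ⥤ _).IsEquivalence :=
  equivalence.isEquivalence_functor

-- `(Γ P)_Δ` is by construction the coproduct of the `P_k` over the surjections `Δ ↠ [k]`.
instance flat_Γ_obj_obj {R : Type u} [CommRing R] (P : ChainComplex (ModuleCat.{u} R) ℕ)
    [∀ i, Module.Flat R (P.X i)] (Δ : SimplexCategoryᵒᵖ) : Module.Flat R ((Γ.obj P).obj Δ) :=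
  open scoped Classical in
  Module.Flat.of_linearEquiv (ModuleCat.coprodIsoDirectSum
    fun A : SimplicialObject.Splitting.IndexSet Δ => P.X A.1.unop.len).toLinearEquiv

end Abelian.DoldKan

end CategoryTheory

open CategoryTheory.Abelian.DoldKan

lemma diagTensorMap_comp (X : SimplicialObject (ModuleCat.{u} R))
    {B B' B'' : SimplicialObject (ModuleCat.{u} R)} (h : B ⟶ B') (h' : B' ⟶ B'') :
    diagTensorMap R X (h ≫ h') = diagTensorMap R X h ≫ diagTensorMap R X h' := by
  ext Δ : 1
  exact MonoidalCategory.whiskerLeft_comp (X.obj Δ) (h.app Δ) (h'.app Δ)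

lemma diagTensorMap_zero (X B B' : SimplicialObject (ModuleCat.{u} R)) :
    diagTensorMap R X (0 : B ⟶ B') = 0 := by
  ext Δ : 1
  exact MonoidalPreadditive.whiskerLeft_zero (X := X.obj Δ) (Y := B.obj Δ) (Z := B'.obj Δ)

abbrev CategoryTheory.ShortComplex.diagTensor (X : SimplicialObject (ModuleCat.{u} R))
    (S : ShortComplex (SimplicialObject (ModuleCat.{u} R))) :
    ShortComplex (SimplicialObject (ModuleCat.{u} R)) :=
  ShortComplex.mk (diagTensorMap R X S.f) (diagTensorMap R X S.g) (by
    rw [← diagTensorMap_comp, S.zero, diagTensorMap_zero])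

lemma CategoryTheory.ShortComplex.ShortExact.diagTensor (X : SimplicialObject (ModuleCat.{u} R))
    [∀ Δ, Module.Flat R (X.obj Δ)] {S : ShortComplex (SimplicialObject (ModuleCat.{u} R))}
    (hS : S.ShortExact) : (S.diagTensor R X).ShortExact := by
  rw [ShortComplex.shortExact_iff_evaluation] at hS ⊢
  exact fun Δ => (hS Δ).map_of_exact (tensorLeft (X.obj Δ))

lemma HomologicalComplex.shortExact_of_moduleCat_degreewise {ι : Type*} {c : ComplexShape ι}
    {S : ShortComplex (HomologicalComplex (ModuleCat.{u} R) c)}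
    (hinj : ∀ i, Function.Injective (S.f.f i)) (hsurj : ∀ i, Function.Surjective (S.g.f i))
    (hexact : ∀ i, LinearMap.range (S.f.f i).hom = LinearMap.ker (S.g.f i).hom) :
    S.ShortExact := by
  rw [HomologicalComplex.shortExact_iff_degreewise_shortExact]
  exact fun i =>
    { exact := (ShortComplex.moduleCat_exact_iff_range_eq_ker _).2 (hexact i)
      mono_f := (ModuleCat.mono_iff_injective _).2 (hinj i)
      epi_g := (ModuleCat.epi_iff_surjective _).2 (hsurj i) }

/-- If all terms of `P` are flat `R`-modules and
`0 → A → B → C → 0` is a degreewise short exact sequence of chain complexes of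
`R`-modules, then `0 → (P ⊗_Δ A)_n → (P ⊗_Δ B)_n → (P ⊗_Δ C)_n → 0` is a short exact
sequence of `R`-modules for every `n`. -/
theorem sTensor_exact (P A B C : ChainComplex (ModuleCat.{u} R) ℕ)
    (hflat : ∀ i, Module.Flat R (P.X i))
    (f : A ⟶ B) (g : B ⟶ C)
    (hinj : ∀ n, Function.Injective (f.f n))
    (hsurj : ∀ n, Function.Surjective (g.f n))
    (hexact : ∀ n, LinearMap.range (f.f n).hom = LinearMap.ker (g.f n).hom) :
    ∀ n, Function.Injective ((sTensorMap R P f).f n) ∧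
      Function.Surjective ((sTensorMap R P g).f n) ∧
      LinearMap.range ((sTensorMap R P f).f n).hom = LinearMap.ker ((sTensorMap R P g).f n).hom := by
  intro n
  have hfg : f ≫ g = 0 := by
    ext i x
    exact (hexact i).le ⟨x, rfl⟩
  have hS : (ShortComplex.mk f g hfg).ShortExact :=
    HomologicalComplex.shortExact_of_moduleCat_degreewise R hinj hsurj hexact
  have : ∀ i, Module.Flat R (P.X i) := hflat
  have hT := ((hS.map_of_exact Γ).diagTensor R (Γ.obj P)).map_of_exact N
  have hTn := hT.map_of_exact (HomologicalComplex.eval _ _ n)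
  exact ⟨hTn.moduleCat_injective_f, hTn.moduleCat_surjective_g, hTn.exact.moduleCat_range_eq_ker⟩

end
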